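/- arXiv:1309.5867 — 5 statements merged into one kernel-verified Lean document; each statement's English description precedes it below -/
import Mathlib

section
/- For every finite simple graph H there exist a natural number m, pairwise non-isomorphic connected finite simple graphs H₁, …, Hₘ, and a polynomial p ∈ ℚ[x₁, …, xₘ] such that for every finite simple graph G one has i(H, G) = p(i(H₁, G), …, i(Hₘ, G)). In other words, the graph parameter G ↦ i(H,G) lies in the subalgebra of functions on graphs generated by the induced-subgraph counts of connected graphs. -/
/-!
If `H` is disconnected, split its vertex set into a union `s` of components and its complement,
and put `A = H[s]`, `B = H[sᶜ]`. Sorting the pairs of induced copies of `A` and `B` in `G` by the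
graph `F` induced on their union gives `i(A, G) i(B, G) = ∑_F c(F) i(F, G)`, where `F` runs over
isomorphism classes of graphs on at most `|H|` vertices and `c(F)` counts the ways to cover `F` by
an induced copy of `A` and one of `B`. By induction on the number of vertices, `i(A, ·)`, `i(B, ·)`
and the terms with `|F| < |H|` lie in the algebra generated by connected counts. If `|F| = |H|` and
`c(F) ≠ 0`, the two copies are disjoint and, as `H` has no edges between `s` and `sᶜ`, `F`
contains a spanning copy of `H`: either `F ≅ H`, or `F` is isomorphic to a graph on `V(H)` strictly
above `H`, which is handled by a second induction, downwards in the finite lattice of graphs on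
`V(H)`.
Since `c(H) > 0`, the identity can be solved for `i(H, ·)`.
-/

/-- `graphCount H G` is the number of vertex subsets `S ⊆ V(G)` such that the induced
subgraph `G[S]` is isomorphic to `H`. -/
noncomputable def graphCount {α β : Type*} [Fintype β]
    (H : SimpleGraph α) (G : SimpleGraph β) : ℕ :=
  Nat.card {S : Finset β // Nonempty (G.induce (S : Set β) ≃g H)}

open Finset SimpleGraph

open scoped Classical

noncomputable section

variable {α α' β V W : Type*}

namespace SimpleGraph.Embedding

variable {F : SimpleGraph W} {G : SimpleGraph β}

def induceImage (f : F ↪g G) (s : Set W) : F.induce s ≃g G.induce (f '' s) where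
  toEquiv := Equiv.Set.image f s f.injective
  map_rel_iff' := by simp

lemma nonempty_induce_map_iso_iff (f : F ↪g G) (S : Finset W) (A : SimpleGraph α) :
    Nonempty (G.induce (S.map f.toEmbedding : Set β) ≃g A) ↔
      Nonempty (F.induce (S : Set W) ≃g A) := by
  rw [coe_map]
  exact ⟨fun ⟨e⟩ => ⟨(f.induceImage S).trans e⟩, fun ⟨e⟩ => ⟨(f.induceImage S).symm.trans e⟩⟩

end SimpleGraph.Embedding

lemma card_eq_of_iso_induce [Fintype α] {G : SimpleGraph β} {S : Finset β} {A : SimpleGraph α}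
    (e : G.induce (S : Set β) ≃g A) : #S = Fintype.card α := by
  simpa using Fintype.card_congr e.toEquiv

section graphCount

variable [Fintype β]

lemma graphCount_congr_left {H : SimpleGraph α} {H' : SimpleGraph α'} (e : H ≃g H')
    (G : SimpleGraph β) : graphCount H G = graphCount H' G :=
  Nat.card_congr <| Equiv.subtypeEquivRight fun _ =>
    ⟨fun ⟨f⟩ => ⟨f.trans e⟩, fun ⟨f⟩ => ⟨f.trans e.symm⟩⟩

lemma graphCount_eq_card_filter (H : SimpleGraph α) (G : SimpleGraph β) :
    graphCount H G = #{S : Finset β | Nonempty (G.induce (S : Set β) ≃g H)} := by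
  rw [graphCount, Nat.card_eq_fintype_card, Fintype.card_subtype]

lemma graphCount_of_isEmpty [IsEmpty α] (H : SimpleGraph α) (G : SimpleGraph β) :
    graphCount H G = 1 := by
  rw [graphCount_eq_card_filter, card_eq_one]
  refine ⟨∅, eq_singleton_iff_unique_mem.2 ⟨?_, fun S hS => ?_⟩⟩
  · have : IsEmpty ((∅ : Finset β) : Set β) := by simp
    simp only [mem_filter, mem_univ, true_and]
    exact ⟨⟨Equiv.equivOfIsEmpty _ _, fun {a} => isEmptyElim a⟩⟩
  · obtain ⟨e⟩ := (mem_filter.1 hS).2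
    have : IsEmpty (S : Set β) := e.toEquiv.isEmpty
    simpa using this

end graphCount

section coverCount

variable [Fintype β] [Fintype W] (A : SimpleGraph α) (B : SimpleGraph α')

def coverCount (G : SimpleGraph β) (U : Finset β) : ℕ :=
  #{p : Finset β × Finset β | p.1 ∪ p.2 = U ∧ Nonempty (G.induce (p.1 : Set β) ≃g A) ∧
    Nonempty (G.induce (p.2 : Set β) ≃g B)}

lemma graphCount_mul_graphCount (G : SimpleGraph β) :
    graphCount A G * graphCount B G = ∑ U, coverCount A B G U := by
  rw [graphCount_eq_card_filter, graphCount_eq_card_filter, ← card_product,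
    card_eq_sum_card_fiberwise (f := fun p => p.1 ∪ p.2) (t := univ) fun _ _ => mem_univ _]
  refine sum_congr rfl fun U _ => congrArg card ?_
  ext ⟨S, T⟩
  simp only [mem_filter, mem_product, mem_univ, true_and]
  tauto

lemma coverCount_map {F : SimpleGraph W} {G : SimpleGraph β} (f : F ↪g G) (U : Finset W) :
    coverCount A B G (U.map f.toEmbedding) = coverCount A B F U := by
  refine (card_bij (fun p _ => (p.1.map f.toEmbedding, p.2.map f.toEmbedding)) ?_ ?_ ?_).symm
  · rintro ⟨S, T⟩ h
    simp only [mem_filter, mem_univ, true_and] at h ⊢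
    obtain ⟨rfl, hS, hT⟩ := h
    exact ⟨(map_union ..).symm, (f.nonempty_induce_map_iso_iff S A).2 hS,
      (f.nonempty_induce_map_iso_iff T B).2 hT⟩
  · rintro ⟨S, T⟩ _ ⟨S', T'⟩ _ h
    simpa only [Prod.ext_iff, map_inj] using h
  · rintro ⟨S', T'⟩ h
    simp only [mem_filter, mem_univ, true_and] at h
    obtain ⟨hU, hS, hT⟩ := h
    obtain ⟨S, -, rfl⟩ := subset_map_iff.1 (hU ▸ subset_union_left)
    obtain ⟨T, -, rfl⟩ := subset_map_iff.1 (hU ▸ subset_union_right)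
    rw [← map_union, map_inj] at hU
    refine ⟨(S, T), ?_, rfl⟩
    simp only [mem_filter, mem_univ, true_and]
    exact ⟨hU, (f.nonempty_induce_map_iso_iff S A).1 hS, (f.nonempty_induce_map_iso_iff T B).1 hT⟩

lemma coverCount_univ_congr {F : SimpleGraph W} {F' : SimpleGraph β} (e : F ≃g F') :
    coverCount A B F univ = coverCount A B F' univ := by
  rw [← coverCount_map A B e.toEmbedding, map_univ_equiv]

lemma coverCount_eq_of_iso_induce {G : SimpleGraph β} {U : Finset β} {F : SimpleGraph W}
    (e : G.induce (U : Set β) ≃g F) : coverCount A B G U = coverCount A B F univ := by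
  have hU : univ.map (Embedding.induce (G := G) (U : Set β)).toEmbedding = U := by
    ext; simp
  rw [← hU, coverCount_map, coverCount_univ_congr A B e]

lemma coverCount_eq_zero_of_lt_card [Fintype α] [Fintype α'] {G : SimpleGraph β}
    {U : Finset β} (hU : Fintype.card α + Fintype.card α' < #U) : coverCount A B G U = 0 := by
  refine card_eq_zero.2 (filter_eq_empty_iff.2 ?_)
  rintro ⟨S, T⟩ - ⟨rfl, ⟨eS⟩, ⟨eT⟩⟩
  have := card_union_le S T
  dsimp only at hU
  rw [card_eq_of_iso_induce eS, card_eq_of_iso_induce eT] at this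
  omega

lemma coverCount_induce_compl_ne_zero (H : SimpleGraph V) [Fintype V] (s : Set V) :
    coverCount (H.induce s) (H.induce sᶜ) H univ ≠ 0 := by
  refine card_ne_zero.2 ⟨(s.toFinset, sᶜ.toFinset), ?_⟩
  simp only [mem_filter, mem_univ, true_and]
  rw [Set.coe_toFinset, Set.coe_toFinset]
  refine ⟨?_, ⟨.refl⟩, ⟨.refl⟩⟩
  ext x
  simp

end coverCount

abbrev SmallGraph (n : ℕ) := Σ k : Fin (n + 1), SimpleGraph (Fin k)

instance SmallGraph.isoSetoid (n : ℕ) : Setoid (SmallGraph n) where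
  r F F' := Nonempty (F.2 ≃g F'.2)
  iseqv := ⟨fun _ => ⟨.refl⟩, fun ⟨e⟩ => ⟨e.symm⟩, fun ⟨e⟩ ⟨e'⟩ => ⟨e.trans e'⟩⟩

abbrev GraphClass (n : ℕ) := Quotient (SmallGraph.isoSetoid n)

instance (n : ℕ) : Fintype (GraphClass n) := Fintype.ofFinite _

namespace GraphClass

variable {n : ℕ} [Fintype W]

lemma eq_of_nonempty_iso {q q' : GraphClass n} (h : Nonempty (q.out.2 ≃g q'.out.2)) : q = q' :=
  Quotient.out_equiv_out.1 h

def ofGraph (F : SimpleGraph W) (h : Fintype.card W ≤ n) : GraphClass n :=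
  ⟦⟨⟨Fintype.card W, Nat.lt_succ_of_le h⟩, F.overFin rfl⟩⟧

lemma nonempty_iso_out_iff {F : SimpleGraph W} (h : Fintype.card W ≤ n) {q : GraphClass n} :
    Nonempty (F ≃g q.out.2) ↔ ofGraph F h = q := by
  rw [ofGraph, Quotient.mk_eq_iff_out]
  exact ⟨fun ⟨e⟩ => ⟨(F.overFinIso rfl).symm.trans e⟩, fun ⟨e⟩ => ⟨(F.overFinIso rfl).trans e⟩⟩

lemma card_filter_nonempty_iso_out {F : SimpleGraph W} (h : Fintype.card W ≤ n) :
    #{q : GraphClass n | Nonempty (F ≃g q.out.2)} = 1 :=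
  card_eq_one.2 ⟨ofGraph F h, by ext q; simp [nonempty_iso_out_iff h, eq_comm]⟩

end GraphClass

lemma sum_coverCount_eq_sum_graphClass [Fintype β] [Fintype α] [Fintype α'] {n : ℕ}
    (A : SimpleGraph α) (B : SimpleGraph α') (hn : Fintype.card α + Fintype.card α' ≤ n)
    (G : SimpleGraph β) :
    ∑ U, coverCount A B G U =
      ∑ q : GraphClass n, coverCount A B q.out.2 univ * graphCount q.out.2 G := by
  symm
  calc ∑ q : GraphClass n, coverCount A B q.out.2 univ * graphCount q.out.2 G
      = ∑ q : GraphClass n, ∑ U : Finset β,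
          if Nonempty (G.induce (U : Set β) ≃g q.out.2) then coverCount A B G U else 0 := by
        refine sum_congr rfl fun q _ => ?_
        rw [graphCount_eq_card_filter, ← sum_filter, mul_comm, ← smul_eq_mul, ← sum_const]
        exact sum_congr rfl fun U hU =>
          (coverCount_eq_of_iso_induce A B (mem_filter.1 hU).2.some).symm
    _ = ∑ U : Finset β, ∑ q : GraphClass n,
          if Nonempty (G.induce (U : Set β) ≃g q.out.2) then coverCount A B G U else 0 := sum_comm
    _ = ∑ U, coverCount A B G U := by
        refine sum_congr rfl fun U _ => ?_
        rw [← sum_filter, sum_const, smul_eq_mul]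
        by_cases hU : #U ≤ n
        · rw [GraphClass.card_filter_nonempty_iso_out (by simpa using hU), one_mul]
        · rw [coverCount_eq_zero_of_lt_card A B (by omega), mul_zero]

lemma card_set_add_card_compl [Fintype V] (s : Set V) :
    Fintype.card s + Fintype.card ↥sᶜ = Fintype.card V := by
  rw [← Fintype.card_sum, Fintype.card_congr (Equiv.Set.sumCompl s)]

lemma exists_le_comap_of_iso_induce_compl {H : SimpleGraph V} {F : SimpleGraph W} {s : Set V}
    {t : Set W} (hs : ∀ x ∈ s, ∀ y ∉ s, ¬H.Adj x y) (e₀ : H.induce s ≃g F.induce t)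
    (e₁ : H.induce sᶜ ≃g F.induce tᶜ) : ∃ e : V ≃ W, H ≤ F.comap e := by
  refine ⟨(Equiv.Set.sumCompl s).symm.trans
    ((e₀.toEquiv.sumCongr e₁.toEquiv).trans (Equiv.Set.sumCompl t)), fun x y hxy => ?_⟩
  by_cases hx : x ∈ s <;> by_cases hy : y ∈ s
  · simpa [Equiv.Set.sumCompl_symm_apply_of_mem hx, Equiv.Set.sumCompl_symm_apply_of_mem hy]
      using e₀.map_adj_iff.2 (show (H.induce s).Adj ⟨x, hx⟩ ⟨y, hy⟩ from hxy)
  · exact absurd hxy (hs x hx y hy)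
  · exact absurd hxy.symm (hs y hy x hx)
  · simpa [Equiv.Set.sumCompl_symm_apply_of_notMem hx, Equiv.Set.sumCompl_symm_apply_of_notMem hy]
      using e₁.map_adj_iff.2 (show (H.induce sᶜ).Adj ⟨x, hx⟩ ⟨y, hy⟩ from hxy)

lemma exists_le_comap_of_coverCount_ne_zero [Fintype V] [Fintype W] {H : SimpleGraph V}
    {F : SimpleGraph W} {s : Set V} (hs : ∀ x ∈ s, ∀ y ∉ s, ¬H.Adj x y)
    (hcard : Fintype.card W = Fintype.card V)
    (h : coverCount (H.induce s) (H.induce sᶜ) F univ ≠ 0) : ∃ e : V ≃ W, H ≤ F.comap e := by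
  obtain ⟨⟨S, T⟩, hST⟩ := card_ne_zero.1 h
  simp only [mem_filter, mem_univ, true_and] at hST
  obtain ⟨hU, ⟨eS⟩, ⟨eT⟩⟩ := hST
  have hdisj : Disjoint S T := by
    rw [← card_union_eq_card_add_card, hU, card_univ, card_eq_of_iso_induce eS,
      card_eq_of_iso_induce eT, hcard, card_set_add_card_compl]
  have hT : (T : Set W) = (S : Set W)ᶜ := by
    rw [← coe_compl, (IsCompl.of_eq hdisj.eq_bot hU).compl_eq]
  rw [hT] at eT
  exact exists_le_comap_of_iso_induce_compl hs eS.symm eT.symm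

abbrev GraphParam := ∀ (β : Type) [Fintype β], SimpleGraph β → ℚ

def countParam (H : SimpleGraph α) : GraphParam := fun _ _ G => graphCount H G

lemma GraphParam.aeval_apply {σ : Type*} (x : σ → GraphParam) (p : MvPolynomial σ ℚ)
    (β : Type) [Fintype β] (G : SimpleGraph β) :
    MvPolynomial.aeval x p β G = MvPolynomial.eval (fun i => x i β G) p := by
  induction p using MvPolynomial.induction_on with
  | C a => simp
  | add p q hp hq => simp [hp, hq]
  | mul_X p i hp => simp [hp]

lemma countParam_congr {H : SimpleGraph α} {H' : SimpleGraph α'} (e : H ≃g H') :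
    countParam H = countParam H' := by
  funext β _ G
  simp only [countParam, graphCount_congr_left e]

lemma countParam_of_isEmpty [IsEmpty α] (H : SimpleGraph α) : countParam H = 1 := by
  funext β _ G
  simp [countParam, graphCount_of_isEmpty]

lemma countParam_mul_countParam [Fintype α] [Fintype α'] {n : ℕ} (A : SimpleGraph α)
    (B : SimpleGraph α') (hn : Fintype.card α + Fintype.card α' ≤ n) :
    countParam A * countParam B =
      ∑ q : GraphClass n, (coverCount A B q.out.2 univ : ℚ) • countParam q.out.2 := by
  funext β _ G
  simp only [Pi.mul_apply, Finset.sum_apply, Pi.smul_apply, smul_eq_mul, countParam]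
  exact_mod_cast
    (graphCount_mul_graphCount A B G).trans (sum_coverCount_eq_sum_graphClass A B hn G)

theorem countParam_mem_of_separated {𝒜 : Subalgebra ℚ GraphParam} {V : Type} [Fintype V]
    {H : SimpleGraph V} {s : Set V}
    (hs : s.Nonempty) (hsc : sᶜ.Nonempty) (hsep : ∀ x ∈ s, ∀ y ∉ s, ¬H.Adj x y)
    (hsmall : ∀ {W : Type} [Fintype W] (F : SimpleGraph W),
      Fintype.card W < Fintype.card V → countParam F ∈ 𝒜)
    (hdense : ∀ H', H < H' → countParam H' ∈ 𝒜) : countParam H ∈ 𝒜 := by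
  set A := H.induce s
  set B := H.induce sᶜ
  have hcard := card_set_add_card_compl s
  have hA : Fintype.card s < Fintype.card V := by
    have := hsc.to_subtype; have := Fintype.card_pos (α := ↥sᶜ); omega
  have hB : Fintype.card ↥sᶜ < Fintype.card V := by
    have := hs.to_subtype; have := Fintype.card_pos (α := ↥s); omega
  set P : GraphClass (Fintype.card V) → Prop := fun q => Nonempty (H ≃g q.out.2)
  have hsum := countParam_mul_countParam A B hcard.le
  rw [← sum_filter_add_sum_filter_not univ P] at hsum
  have hiso : ∑ q with P q,
      (coverCount A B q.out.2 univ : ℚ) • countParam q.out.2 =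
        (coverCount A B H univ : ℚ) • countParam H := by
    have : ∀ q ∈ ({q | P q} : Finset _),
        (coverCount A B q.out.2 univ : ℚ) • countParam q.out.2 =
          (coverCount A B H univ : ℚ) • countParam H := fun q hq => by
      obtain ⟨e⟩ := (mem_filter.1 hq).2
      rw [← countParam_congr e, ← coverCount_univ_congr A B e]
    rw [sum_congr rfl this, sum_const, GraphClass.card_filter_nonempty_iso_out le_rfl, one_smul]
  have hrest : ∑ q with ¬P q,
      (coverCount A B q.out.2 univ : ℚ) • countParam q.out.2 ∈ 𝒜 := by
    refine sum_mem fun q hq => ?_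
    obtain hc0 | hc0 := eq_or_ne (coverCount A B q.out.2 univ) 0
    · simp [hc0]
    refine 𝒜.smul_mem ?_ _
    obtain hlt | heq := (Nat.lt_succ_iff.1 q.out.1.2).lt_or_eq
    · exact hsmall _ (by simpa using hlt)
    -- `q.out.2` contains a spanning copy of `H` and is not isomorphic to it
    obtain ⟨e, hle⟩ := exists_le_comap_of_coverCount_ne_zero hsep (by simpa using heq) hc0
    rw [← countParam_congr (Iso.comap e _)]
    exact hdense _ (hle.lt_of_ne fun h => (mem_filter.1 hq).2 ⟨h ▸ Iso.comap e _⟩)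
  have hc : (coverCount A B H univ : ℚ) ≠ 0 :=
    Nat.cast_ne_zero.2 (coverCount_induce_compl_ne_zero H s)
  have hmem : (coverCount A B H univ : ℚ) • countParam H ∈ 𝒜 := by
    rw [← hiso, eq_sub_of_add_eq hsum.symm]
    exact sub_mem (mul_mem (hsmall A hA) (hsmall B hB)) hrest
  simpa [hc] using 𝒜.smul_mem hmem (coverCount A B H univ : ℚ)⁻¹

def connectedCountAlgebra (N : ℕ) : Subalgebra ℚ GraphParam :=
  Algebra.adjoin ℚ
    (Set.range fun q : {q : GraphClass N // q.out.2.Connected} => countParam q.1.out.2)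

lemma countParam_mem_connectedCountAlgebra_of_connected {N : ℕ} {V : Type} [Fintype V]
    {H : SimpleGraph V} (hH : H.Connected) (hN : Fintype.card V ≤ N) :
    countParam H ∈ connectedCountAlgebra N := by
  obtain ⟨e⟩ := (GraphClass.nonempty_iso_out_iff (F := H) hN).2 rfl
  rw [countParam_congr e]
  exact Algebra.subset_adjoin ⟨⟨_, e.connected_iff.1 hH⟩, rfl⟩

theorem countParam_mem_connectedCountAlgebra {N : ℕ} {V : Type} [Fintype V]
    (H : SimpleGraph V) (hN : Fintype.card V ≤ N) : countParam H ∈ connectedCountAlgebra N := by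
  induction hV : Fintype.card V using Nat.strong_induction_on generalizing V with | _ k ihk => ?_
  induction H using WellFoundedGT.induction with | _ H ihH => ?_
  by_cases hH : H.Connected
  · exact countParam_mem_connectedCountAlgebra_of_connected hH hN
  cases isEmpty_or_nonempty V
  · rw [countParam_of_isEmpty]
    exact one_mem _
  obtain ⟨v, w, hvw⟩ : ∃ v w, ¬H.Reachable v w := by
    simpa [connected_iff, Preconnected, *] using hH
  refine countParam_mem_of_separated (s := {x | H.Reachable v x}) ⟨v, .rfl⟩ ⟨w, hvw⟩
    (fun x hx y hy hxy => hy (hx.trans hxy.reachable))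
    (fun F hF => ihk _ (hV ▸ hF) F (by omega) rfl) ihH

end

/-- For every finite simple graph `H` there exist pairwise non-isomorphic connected finite
simple graphs `H₁, …, Hₘ` and a polynomial `p ∈ ℚ[x₁, …, xₘ]` such that for every finite
simple graph `G` one has `i(H, G) = p(i(H₁, G), …, i(Hₘ, G))`. -/
theorem graphCount_mem_algebra_of_connected_counts {α : Type} [Fintype α]
    (H : SimpleGraph α) :
    ∃ (m : ℕ) (n : Fin m → ℕ) (Hs : (i : Fin m) → SimpleGraph (Fin (n i)))
      (p : MvPolynomial (Fin m) ℚ),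
      (∀ i, (Hs i).Connected) ∧
      (∀ i j, i ≠ j → IsEmpty (Hs i ≃g Hs j)) ∧
      (∀ (β : Type) [Fintype β] (G : SimpleGraph β),
        (graphCount H G : ℚ) =
          MvPolynomial.eval (fun i => (graphCount (Hs i) G : ℚ)) p) := by
  have hH := countParam_mem_connectedCountAlgebra H le_rfl
  rw [connectedCountAlgebra, Algebra.adjoin_range_eq_range_aeval] at hH
  obtain ⟨p, hp⟩ := hH
  let e := Fintype.equivFin {q : GraphClass (Fintype.card α) // q.out.2.Connected}
  refine ⟨_, fun i => (e.symm i).1.out.1, fun i => (e.symm i).1.out.2, MvPolynomial.rename e p,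
    fun i => (e.symm i).2, fun i j hij => ⟨fun f => hij ?_⟩, fun β _ G => ?_⟩
  · exact e.symm.injective (Subtype.ext (GraphClass.eq_of_nonempty_iso ⟨f⟩))
  · have hG := congrFun (congrFun (congrFun hp β) ‹_›) G
    simp only [AlgHom.toRingHom_eq_coe, RingHom.coe_coe, GraphParam.aeval_apply, countParam] at hG
    rw [MvPolynomial.eval_rename, ← hG]
    congr 2
    funext q
    dsimp only [Function.comp_apply]
    rw [Equiv.symm_apply_apply]
end

section
/- Let H₁, H₂, …, Hₘ be pairwise non-isomorphic connected finite simple graphs, each with at least one vertex. If a polynomial p ∈ ℝ[x₁, …, xₘ] satisfies p(i(H₁, G), i(H₂, G), …, i(Hₘ, G)) = 0 for every finite simple graph G, then p is the zero polynomial. Equivalently, the functions G ↦ i(H, G), as H ranges over isomorphism classes of connected graphs, are algebraically independent, so the algebra they generate is a free polynomial algebra on these generators. -/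
/-!
For `k : Fin m → ℕ` let `G_k` be the disjoint union of `k i` copies of `Hᵢ`. A connected induced
subgraph of `G_k` lies inside a single copy, so `i(Hⱼ, G_k) = ∑ᵢ k i * i(Hⱼ, Hᵢ)`: the count
vector of `G_k` is `C k` for the matrix `Cⱼᵢ = i(Hⱼ, Hᵢ)`. Grouping the `Hᵢ` by number of vertices
makes `C` block triangular with diagonal blocks that are diagonal with positive entries, so `C` is
invertible. Hence `p ∘ C` vanishes on `ℕᵐ`, so it is zero, and then so is `p`.
-/

open scoped Matrix

namespace MvPolynomial

variable {σ R : Type*}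

theorem eq_zero_of_eval_natCast_eq_zero [CommRing R] [IsDomain R] [CharZero R]
    {p : MvPolynomial σ R} (h : ∀ k : σ → ℕ, eval (fun i => (k i : R)) p = 0) : p = 0 := by
  refine funext_set (fun _ => Set.range ((↑) : ℕ → R))
    (fun _ => Set.infinite_range_of_injective Nat.cast_injective) fun x hx => ?_
  choose k hk using fun i => hx i (Set.mem_univ i)
  rw [map_zero, ← h k]
  exact congrArg (eval · p) (_root_.funext hk).symm

theorem eval_bind₁_linear [Fintype σ] [CommRing R] (A : Matrix σ σ R) (x : σ → R)
    (p : MvPolynomial σ R) :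
    eval x (bind₁ (fun j => ∑ i, C (A j i) * X i) p) = eval (A *ᵥ x) p := by
  rw [show eval x (bind₁ _ p) = eval (fun j => eval x (∑ i, C (A j i) * X i)) p from
    eval₂Hom_bind₁ _ _ _ _]
  congr 2
  funext j
  simp [Matrix.mulVec, dotProduct]

theorem eq_zero_of_eval_mulVec_natCast_eq_zero [Fintype σ] [DecidableEq σ] [CommRing R]
    [IsDomain R] [CharZero R] {A : Matrix σ σ R} (hA : IsUnit A.det) {p : MvPolynomial σ R}
    (h : ∀ k : σ → ℕ, eval (A *ᵥ fun i => (k i : R)) p = 0) : p = 0 := by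
  have hsubst : bind₁ (fun j => ∑ i, C (A j i) * X i) p = 0 :=
    eq_zero_of_eval_natCast_eq_zero fun k => by rw [eval_bind₁_linear, h]
  refine MvPolynomial.funext fun x => ?_
  obtain ⟨y, rfl⟩ := Matrix.mulVec_surjective_iff_isUnit.2 ((A.isUnit_iff_isUnit_det).2 hA) x
  rw [← eval_bind₁_linear, hsubst, map_zero, map_zero]

end MvPolynomial

namespace Matrix

variable {m α R : Type*} [Fintype m] [DecidableEq m] [CommRing R] [LinearOrder α]

theorem BlockTriangular.det_eq_prod_diag {M : Matrix m m R} {b : m → α}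
    (hM : M.BlockTriangular b) (hblock : ∀ i j, i ≠ j → b i = b j → M i j = 0) :
    M.det = ∏ i, M i i := by
  have hdiag : ∀ a, M.toSquareBlock b a = diagonal fun i => M i.1 i.1 := fun a => by
    ext i j
    rcases eq_or_ne i j with rfl | hij
    · simp [toSquareBlock_def]
    · rw [diagonal_apply_ne _ hij, toSquareBlock_def, of_apply,
        hblock i j (Subtype.coe_injective.ne hij) (i.2.trans j.2.symm)]
  rw [hM.det, ← Finset.prod_fiberwise_of_maps_to (g := b)
    fun i _ => Finset.mem_image_of_mem b (Finset.mem_univ i)]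
  refine Finset.prod_congr rfl fun a _ => ?_
  rw [hdiag, det_diagonal]
  exact (Finset.prod_subtype _ (by simp) fun i => M i i).symm

end Matrix

namespace SimpleGraph

variable {ι V W : Type*} {X : ι → Type*} {G : SimpleGraph V} {G' : SimpleGraph W}

noncomputable def Embedding.induceIso (φ : G ↪g G') {s : Set V} {t : Set W} (h : φ '' s = t) :
    G.induce s ≃g G'.induce t where
  toEquiv := (Equiv.Set.image φ s φ.injective).trans (Equiv.setCongr h)
  map_rel_iff' := by simp

protected def sigma (G : ∀ i, SimpleGraph (X i)) : SimpleGraph (Σ i, X i) :=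
  ⨆ i, (G i).map (Function.Embedding.sigmaMk i)

variable {G : ∀ i, SimpleGraph (X i)}

theorem sigma_adj {x y : Σ i, X i} :
    (SimpleGraph.sigma G).Adj x y ↔ ∃ i a b, (G i).Adj a b ∧ ⟨i, a⟩ = x ∧ ⟨i, b⟩ = y := by
  simp [SimpleGraph.sigma, iSup_adj, map_adj]

theorem sigma_adj_mk {i : ι} {a b : X i} :
    (SimpleGraph.sigma G).Adj ⟨i, a⟩ ⟨i, b⟩ ↔ (G i).Adj a b := by
  refine sigma_adj.trans ⟨?_, fun h => ⟨i, a, b, h, rfl, rfl⟩⟩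
  rintro ⟨j, a', b', h, ha, hb⟩
  obtain ⟨rfl, rfl⟩ := Sigma.mk.inj_iff.1 ha
  obtain ⟨-, rfl⟩ := Sigma.mk.inj_iff.1 hb
  exact h

theorem Adj.fst_eq_of_sigma {x y : Σ i, X i} (h : (SimpleGraph.sigma G).Adj x y) :
    x.1 = y.1 := by
  obtain ⟨i, a, b, -, rfl, rfl⟩ := sigma_adj.1 h
  rfl

theorem Reachable.fst_eq_of_sigma {x y : Σ i, X i} (h : (SimpleGraph.sigma G).Reachable x y) :
    x.1 = y.1 := by
  obtain ⟨w⟩ := h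
  induction w with
  | nil => rfl
  | cons h _ ih => exact h.fst_eq_of_sigma.trans ih

def sigmaEmbedding (G : ∀ i, SimpleGraph (X i)) (i : ι) : G i ↪g SimpleGraph.sigma G where
  toEmbedding := Function.Embedding.sigmaMk i
  map_rel_iff' := sigma_adj_mk

end SimpleGraph

open SimpleGraph

theorem graphCount_sigma {ι W : Type*} {X : ι → Type*} [Fintype ι] [∀ i, Fintype (X i)]
    (G : ∀ i, SimpleGraph (X i)) {H : SimpleGraph W} (hH : H.Connected) :
    graphCount H (SimpleGraph.sigma G) = ∑ i, graphCount H (G i) := by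
  have := hH.nonempty
  let F : (Σ i, {T : Finset (X i) // Nonempty ((G i).induce (T : Set (X i)) ≃g H)}) →
      {S : Finset (Σ i, X i) // Nonempty ((SimpleGraph.sigma G).induce (S : Set _) ≃g H)} :=
    fun z => ⟨z.2.1.map (Function.Embedding.sigmaMk z.1), z.2.2.map fun e =>
      ((sigmaEmbedding G z.1).induceIso (Finset.coe_map _ _).symm).symm.trans e⟩
  have hF : F.Bijective := by
    constructor
    · rintro ⟨i, T, ⟨e⟩⟩ ⟨j, T', hT'⟩ hFF
      have hmap : T.map (Function.Embedding.sigmaMk i) =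
          T'.map (Function.Embedding.sigmaMk j) := congrArg Subtype.val hFF
      obtain ⟨a, ha⟩ := e.symm (Classical.arbitrary W)
      obtain ⟨a', -, h⟩ := Finset.mem_map.1 (hmap ▸ Finset.mem_map_of_mem _ ha)
      obtain rfl := (Sigma.mk.inj_iff.1 h).1
      obtain rfl := Finset.map_injective _ hmap
      rfl
    · rintro ⟨S, ⟨e⟩⟩
      obtain ⟨⟨i, a⟩, ha⟩ := e.symm (Classical.arbitrary W)
      have hfst : ∀ x ∈ S, x.1 = i := fun x hx =>
        (((e.preconnected_iff.2 hH.preconnected) ⟨x, hx⟩ ⟨⟨i, a⟩, ha⟩).map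
          (Embedding.induce _).toHom).fst_eq_of_sigma
      have hrange : (S : Set (Σ i, X i)) ⊆ Set.range (Sigma.mk i) := by
        rintro ⟨j, b⟩ hb
        obtain rfl := hfst _ hb
        exact ⟨b, rfl⟩
      let T := S.preimage (Sigma.mk i) sigma_mk_injective.injOn
      have hT : Sigma.mk i '' (T : Set (X i)) = S := by
        rw [Finset.coe_preimage]
        exact Set.image_preimage_eq_of_subset hrange
      refine ⟨⟨i, T, ⟨((sigmaEmbedding G i).induceIso hT).trans e⟩⟩, Subtype.ext ?_⟩
      exact Finset.coe_injective ((Finset.coe_map _ _).trans hT)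
  rw [graphCount, ← Nat.card_eq_of_bijective F hF, Nat.card_sigma]
  rfl

theorem graphCount_sigma_copies {ι W : Type*} {X : ι → Type*} [Fintype ι]
    [∀ i, Fintype (X i)]
    (G : ∀ i, SimpleGraph (X i)) {H : SimpleGraph W} (hH : H.Connected) (k : ι → ℕ) :
    graphCount H (SimpleGraph.sigma fun t : Σ i, Fin (k i) => G t.1) =
      ∑ i, k i * graphCount H (G i) := by
  rw [graphCount_sigma _ hH, Fintype.sum_sigma]
  refine Finset.sum_congr rfl fun i _ => ?_
  show ∑ _y : Fin (k i), graphCount H (G i) = _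
  simp

theorem graphCount_eq_zero_of_card_le {V W : Type*} [Fintype V] [Fintype W]
    {G : SimpleGraph V} {H : SimpleGraph W} (hcard : Fintype.card V ≤ Fintype.card W)
    (hGH : IsEmpty (G ≃g H)) : graphCount H G = 0 := by
  rw [graphCount, Nat.card_eq_zero]
  refine Or.inl ⟨fun ⟨S, ⟨e⟩⟩ => hGH.false ?_⟩
  have hS : S = Finset.univ := Finset.eq_univ_of_card S
    (le_antisymm (Finset.card_le_univ S)
      (by simpa using hcard.trans (Fintype.card_congr e.toEquiv).ge))
  subst hS
  rw [Finset.coe_univ] at e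
  exact (induceUnivIso G).symm.trans e

theorem graphCount_self_pos {V : Type*} [Fintype V] (G : SimpleGraph V) : 0 < graphCount G G :=
  have : Nonempty {S : Finset V // Nonempty (G.induce (S : Set V) ≃g G)} :=
    ⟨⟨Finset.univ, ⟨by rw [Finset.coe_univ]; exact induceUnivIso G⟩⟩⟩
  Nat.card_pos

theorem det_graphCount_ne_zero {ι R : Type*} [Fintype ι] [DecidableEq ι] [CommRing R]
    [IsDomain R] [CharZero R] {X : ι → Type*} [∀ i, Fintype (X i)] (H : ∀ i, SimpleGraph (X i))
    (hH : ∀ i j, i ≠ j → IsEmpty (H i ≃g H j)) :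
    (Matrix.of fun j i => (graphCount (H j) (H i) : R)).det ≠ 0 := by
  have hzero : ∀ i j, i ≠ j → Fintype.card (X i) ≤ Fintype.card (X j) →
      graphCount (H j) (H i) = 0 := fun i j hij hle =>
    graphCount_eq_zero_of_card_le hle (hH i j hij)
  have hM : (Matrix.of fun j i => (graphCount (H j) (H i) : R)).BlockTriangular
      fun i => Fintype.card (X i) := fun j i hlt => by
    simp [hzero i j (by rintro rfl; exact lt_irrefl _ hlt) hlt.le]
  rw [hM.det_eq_prod_diag fun j i hji heq => by simp [hzero i j hji.symm heq.ge]]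
  exact Finset.prod_ne_zero_iff.2 fun i _ => by simpa using (graphCount_self_pos (H i)).ne'

theorem connected_graphCounts_algebraically_independent_general
    (m : ℕ) (n : Fin m → ℕ) (Hs : (i : Fin m) → SimpleGraph (Fin (n i)))
    (hconn : ∀ i, (Hs i).Connected)
    (hnoniso : ∀ i j, i ≠ j → IsEmpty (Hs i ≃g Hs j))
    (p : MvPolynomial (Fin m) ℝ)
    (hp : ∀ (β : Type) [Fintype β] (G : SimpleGraph β),
      MvPolynomial.eval (fun i => (graphCount (Hs i) G : ℝ)) p = 0) :
    p = 0 := by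
  let C : Matrix (Fin m) (Fin m) ℝ := Matrix.of fun j i => (graphCount (Hs j) (Hs i) : ℝ)
  refine MvPolynomial.eq_zero_of_eval_mulVec_natCast_eq_zero (A := C)
    (isUnit_iff_ne_zero.2 (det_graphCount_ne_zero Hs hnoniso)) fun k => ?_
  have hcount : C *ᵥ (fun i => (k i : ℝ)) = fun j =>
      (graphCount (Hs j) (SimpleGraph.sigma fun t : Σ i, Fin (k i) => Hs t.1) : ℝ) := by
    funext j
    rw [graphCount_sigma_copies Hs (hconn j) k]
    simp [C, Matrix.mulVec, dotProduct, mul_comm]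
  rw [hcount]
  exact hp _ _

/-- Let `H₁, …, Hₘ` be pairwise non-isomorphic connected finite simple graphs, each with at
least one vertex. If a polynomial `p ∈ ℝ[x₁, …, xₘ]` satisfies
`p(i(H₁, G), …, i(Hₘ, G)) = 0` for every finite simple graph `G`, then `p = 0`; i.e. the
induced-subgraph counts of connected graphs are algebraically independent. -/
theorem connected_graphCounts_algebraically_independent
    (m : ℕ) (n : Fin m → ℕ) (Hs : (i : Fin m) → SimpleGraph (Fin (n i)))
    (hconn : ∀ i, (Hs i).Connected)
    (hpos : ∀ i, 1 ≤ n i)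
    (hnoniso : ∀ i j, i ≠ j → IsEmpty (Hs i ≃g Hs j))
    (p : MvPolynomial (Fin m) ℝ)
    (hp : ∀ (β : Type) [Fintype β] (G : SimpleGraph β),
      MvPolynomial.eval (fun i => (graphCount (Hs i) G : ℝ)) p = 0) :
    p = 0 :=
  connected_graphCounts_algebraically_independent_general m n Hs hconn hnoniso p hp
end

section
/- For every sequence of integers (aₙ)_{n≥1} there exists a sequence of integers (bₙ)_{n≥1} such that, in the ring ℤ[[q]] of formal power series, 1 + Σ_{n=1}^∞ aₙ qⁿ = Π_{n=1}^∞ (1 − qⁿ)^{bₙ}; precisely, for every N ≥ 1 the power series 1 + Σ_{n=1}^∞ aₙ qⁿ is congruent to the finite product Π_{n=1}^N (1 − qⁿ)^{bₙ} modulo q^{N+1}, where for negative exponents (1 − qⁿ)^{bₙ} denotes the corresponding power of the inverse of the unit 1 − qⁿ in ℤ[[q]]. -/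
/-!
Since `(1 - qⁿ)^b ≡ 1 - b qⁿ (mod qⁿ⁺¹)` for every integer `b`, multiplying a series with
constant coefficient `1` by `(1 - qⁿ)^b` leaves its coefficients below `n` unchanged and
lowers its `n`-th coefficient by `b`. Choosing `b₁, b₂, …` one after the other, each one
corrects the next coefficient of the partial product.
-/

open PowerSeries

/-- For `n ≥ 1`, the power series `1 - qⁿ` is a unit of `ℤ[[q]]` (its constant
coefficient is `1`).  Here we index by `n - 1`, i.e. `oneSubPowUnit n = 1 - q^(n+1)`. -/
noncomputable def oneSubPowUnit (n : ℕ) : (PowerSeries ℤ)ˣ :=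
  (PowerSeries.isUnit_iff_constantCoeff.mpr (by simp : IsUnit
    (constantCoeff (R := ℤ) (1 - (X : PowerSeries ℤ) ^ (n + 1))))).unit

lemma oneSubPowUnit_val (n : ℕ) : (oneSubPowUnit n : ℤ⟦X⟧) = 1 - X ^ (n + 1) := rfl

section UnitOneSubXPow

variable {R : Type*} [CommRing R] {n : ℕ} {u : R⟦X⟧ˣ}

lemma zpow_add_one_sub_eq (hu : (u : R⟦X⟧) = 1 - X ^ (n + 1)) (b : ℤ) :
    ((u ^ (b + 1) : R⟦X⟧ˣ) : R⟦X⟧) - (1 - C ((b + 1 : ℤ) : R) * X ^ (n + 1)) =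
      (((u ^ b : R⟦X⟧ˣ) : R⟦X⟧) - (1 - C (b : R) * X ^ (n + 1))) * (u : R⟦X⟧) +
        X ^ (n + 2) * (C (b : R) * X ^ n) := by
  rw [zpow_add_one, Units.val_mul, hu]
  push_cast
  simp only [map_add, map_one]
  ring

lemma X_pow_dvd_zpow_sub (hu : (u : R⟦X⟧) = 1 - X ^ (n + 1)) (b : ℤ) :
    X ^ (n + 2) ∣ ((u ^ b : R⟦X⟧ˣ) : R⟦X⟧) - (1 - C (b : R) * X ^ (n + 1)) := by
  -- `u` is a unit, so the recurrence for the error term can be run downwards as well as upwards.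
  have step (c : ℤ) :
      X ^ (n + 2) ∣ ((u ^ (c + 1) : R⟦X⟧ˣ) : R⟦X⟧) - (1 - C ((c + 1 : ℤ) : R) * X ^ (n + 1)) ↔
        X ^ (n + 2) ∣ ((u ^ c : R⟦X⟧ˣ) : R⟦X⟧) - (1 - C (c : R) * X ^ (n + 1)) := by
    rw [zpow_add_one_sub_eq hu, dvd_add_left (dvd_mul_right _ _), Units.dvd_mul_right]
  induction b using Int.induction_on with
  | zero => simp
  | succ k ih => exact (step k).mpr ih
  | pred k ih => exact (step (-k - 1)).mp (by rwa [sub_add_cancel])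

lemma coeff_mul_zpow_of_lt (hu : (u : R⟦X⟧) = 1 - X ^ (n + 1)) (P : R⟦X⟧) (b : ℤ) {d : ℕ}
    (hd : d < n + 2) :
    coeff d (P * ((u ^ b : R⟦X⟧ˣ) : R⟦X⟧)) = coeff d P - b * coeff d (X ^ (n + 1) * P) := by
  have hdvd : X ^ (n + 2) ∣ P * ((u ^ b : R⟦X⟧ˣ) : R⟦X⟧) - P * (1 - C (b : R) * X ^ (n + 1)) := by
    rw [← mul_sub]
    exact dvd_mul_of_dvd_right (X_pow_dvd_zpow_sub hu b) P
  have hcoeff := X_pow_dvd_iff.mp hdvd d hd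
  rw [map_sub, sub_eq_zero] at hcoeff
  rw [hcoeff, mul_sub, mul_one, map_sub, mul_left_comm, coeff_C_mul, mul_comm P]

lemma coeff_mul_zpow_of_le (hu : (u : R⟦X⟧) = 1 - X ^ (n + 1)) (P : R⟦X⟧) (b : ℤ) {d : ℕ}
    (hd : d ≤ n) : coeff d (P * ((u ^ b : R⟦X⟧ˣ) : R⟦X⟧)) = coeff d P := by
  rw [coeff_mul_zpow_of_lt hu P b (by omega), coeff_X_pow_mul', if_neg (by omega), mul_zero,
    sub_zero]

lemma coeff_succ_mul_zpow (hu : (u : R⟦X⟧) = 1 - X ^ (n + 1)) (P : R⟦X⟧) (b : ℤ) :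
    coeff (n + 1) (P * ((u ^ b : R⟦X⟧ˣ) : R⟦X⟧)) = coeff (n + 1) P - b * constantCoeff P := by
  rw [coeff_mul_zpow_of_lt hu P b (by omega), coeff_X_pow_mul', if_pos le_rfl, Nat.sub_self,
    coeff_zero_eq_constantCoeff]

end UnitOneSubXPow

noncomputable def greedyProduct (f : ℤ⟦X⟧) : ℕ → ℤ⟦X⟧ˣ
  | 0 => 1
  | n + 1 => greedyProduct f n *
      oneSubPowUnit n ^ (coeff (n + 1) (greedyProduct f n : ℤ⟦X⟧) - coeff (n + 1) f)

lemma greedyProduct_eq_prod (f : ℤ⟦X⟧) (N : ℕ) :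
    greedyProduct f N = ∏ j ∈ Finset.range N,
      oneSubPowUnit j ^ (coeff (j + 1) (greedyProduct f j : ℤ⟦X⟧) - coeff (j + 1) f) := by
  induction N with
  | zero => rfl
  | succ n ih => rw [Finset.prod_range_succ, ← ih, greedyProduct]

lemma coeff_greedyProduct {f : ℤ⟦X⟧} (hf : constantCoeff f = 1) (N : ℕ) {d : ℕ} (hd : d ≤ N) :
    coeff d (greedyProduct f N : ℤ⟦X⟧) = coeff d f := by
  induction N generalizing d with
  | zero =>
    rw [Nat.le_zero.mp hd, coeff_zero_eq_constantCoeff, hf, greedyProduct, Units.val_one,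
      map_one]
  | succ n ih =>
    rw [greedyProduct, Units.val_mul]
    rcases hd.lt_or_eq with hd | rfl
    · rw [coeff_mul_zpow_of_le (oneSubPowUnit_val n) _ _ (Nat.lt_succ_iff.mp hd)]
      exact ih (Nat.lt_succ_iff.mp hd)
    · have hconst : constantCoeff (greedyProduct f n : ℤ⟦X⟧) = 1 := by
        rw [← coeff_zero_eq_constantCoeff_apply, ih (Nat.zero_le n),
          coeff_zero_eq_constantCoeff_apply, hf]
      rw [coeff_succ_mul_zpow (oneSubPowUnit_val n), hconst, Int.cast_id, mul_one,
        sub_sub_cancel]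

/-- For every sequence of integers `(aₙ)` there is a sequence of integers `(bₙ)` such that
`1 + Σ_{n≥1} aₙ qⁿ = Π_{n≥1} (1 - qⁿ)^{bₙ}` in `ℤ[[q]]`: for every `N ≥ 1` the series
`1 + Σ aₙ qⁿ` agrees with the finite product `Π_{n=1}^{N} (1 - qⁿ)^{bₙ}` in all
coefficients of degree `≤ N`. -/
theorem exists_integer_exponents_infinite_product (a : ℕ → ℤ) :
    ∃ b : ℕ → ℤ, ∀ N : ℕ, 1 ≤ N → ∀ d : ℕ, d ≤ N →
      (PowerSeries.coeff (R := ℤ) d) (PowerSeries.mk (fun n => if n = 0 then 1 else a n)) =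
      (PowerSeries.coeff (R := ℤ) d)
        ((∏ j ∈ Finset.range N, (oneSubPowUnit j ^ b (j + 1)) : (PowerSeries ℤ)ˣ) :
          PowerSeries ℤ) := by
  set f : ℤ⟦X⟧ := PowerSeries.mk (fun n => if n = 0 then 1 else a n)
  have hf : constantCoeff f = 1 := by simp [f]
  refine ⟨fun n => coeff n (greedyProduct f (n - 1) : ℤ⟦X⟧) - coeff n f, fun N _ d hd => ?_⟩
  simp only [Nat.add_sub_cancel]
  rw [← greedyProduct_eq_prod, coeff_greedyProduct hf N hd]
end

section
/- Let n ≥ 3 and let Cₙ denote the cycle graph on n vertices. Then for every finite simple graph G and every Whitney flip G' of G, i(Cₙ, G) = i(Cₙ, G'); that is, the number of induced n-cycles of a graph is invariant under Whitney flips. -/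
/-- `G'` is a Whitney flip of `G`: there are distinct vertices `u, v` and a partition
`V(G) \ {u, v} = A ⊔ B` with no `G`-edge between `A` and `B`, such that `G'` is obtained
from `G` by keeping the adjacencies inside `A ∪ {u, v}` and inside `B`, and reattaching
`B` to `u, v` with the roles of `u` and `v` interchanged. -/
def IsWhitneyFlip {V : Type*} (G G' : SimpleGraph V) : Prop :=
  ∃ (u v : V) (A B : Set V), u ≠ v ∧
    A ∪ B = ({u, v} : Set V)ᶜ ∧ Disjoint A B ∧
    (∀ a ∈ A, ∀ b ∈ B, ¬ G.Adj a b) ∧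
    (∀ x y : V, G'.Adj x y ↔
      (x ∈ A ∪ {u, v} ∧ y ∈ A ∪ {u, v} ∧ G.Adj x y) ∨
      (x ∈ B ∧ y ∈ B ∧ G.Adj x y) ∨
      (x ∈ B ∧ y = u ∧ G.Adj x v) ∨ (x = u ∧ y ∈ B ∧ G.Adj v y) ∨
      (x ∈ B ∧ y = v ∧ G.Adj x u) ∨ (x = v ∧ y ∈ B ∧ G.Adj u y))

/-!
Let `S` induce an `n`-cycle in `G`. If `S` misses `A`, the transposition `(u v)` carries `S` to an
induced `n`-cycle of `G'`; if `S` misses `B`, then `S` itself induces one. Otherwise `S` meets both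
sides, and since deleting a single vertex leaves a cycle connected while no edge joins `A` to `B`,
both `u` and `v` lie on the cycle. Labelling the cycle by `ℤ/n`, the part in `B` is then an arc
between `u` and `v`, and `G'[S]` is the cycle obtained by reflecting that arc by `i ↦ u + v - i`.
The resulting map `S ↦ S'` is an involution, and as the flip relation is symmetric it exchanges
the induced `n`-cycles of `G` and of `G'`.
-/

open Equiv Fin.CommRing

namespace Fin

variable {n : ℕ}

theorem add_natCast_inj (p : Fin (n + 2)) {k l : ℕ} (hk : k < n + 2) (hl : l < n + 2) :
    p + (k : Fin (n + 2)) = p + l ↔ k = l := by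
  rw [add_right_inj, Fin.ext_iff, Fin.val_natCast, Fin.val_natCast, Nat.mod_eq_of_lt hk,
    Nat.mod_eq_of_lt hl]

theorem add_val_sub (p i : Fin (n + 2)) : p + ((i - p).val : Fin (n + 2)) = i := by
  rw [Fin.cast_val_eq_self, add_sub_cancel]

end Fin

theorem Equiv.swap_apply_mem_iff {α : Type*} [DecidableEq α] {u v x : α} {A : Set α}
    (hu : u ∉ A) (hv : v ∉ A) : swap u v x ∈ A ↔ x ∈ A := by
  rcases eq_or_ne x u with rfl | hxu
  · simp [hu, hv]
  rcases eq_or_ne x v with rfl | hxv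
  · simp [hu, hv]
  rw [swap_apply_of_ne_of_ne hxu hxv]

namespace SimpleGraph

section CycleGraph

variable {n : ℕ} {P R : Set (Fin (n + 2))}

theorem cycleGraph_adj_sub_sub {c i j : Fin (n + 2)} :
    (cycleGraph (n + 2)).Adj (c - i) (c - j) ↔ (cycleGraph (n + 2)).Adj i j := by
  rw [cycleGraph_adj, cycleGraph_adj, sub_sub_sub_cancel_left, sub_sub_sub_cancel_left, or_comm]

theorem add_natCast_mem_iff_of_le
    (hP : ∀ i ∈ P, ∀ j, (cycleGraph (n + 2)).Adj i j → j ∈ P ∨ j ∈ R) (p : Fin (n + 2))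
    {a b : ℕ} (hab : a ≤ b) (hR : ∀ k, a ≤ k → k ≤ b → p + k ∉ R) :
    p + (a : Fin (n + 2)) ∈ P ↔ p + (b : Fin (n + 2)) ∈ P := by
  induction b, hab using Nat.le_induction with
  | base => rfl
  | succ b hab ih =>
    have hadj : (cycleGraph (n + 2)).Adj (p + b) (p + (b + 1 : ℕ)) := by
      rw [cycleGraph_adj]; right; push_cast; ring
    rw [ih fun k hk hkb => hR k hk (by omega)]
    constructor
    · exact fun hb => (hP _ hb _ hadj).resolve_right (hR _ (by omega) le_rfl)
    · exact fun hb => (hP _ hb _ hadj.symm).resolve_right (hR _ hab (by omega))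

theorem add_natCast_mem_iff
    (hP : ∀ i ∈ P, ∀ j, (cycleGraph (n + 2)).Adj i j → j ∈ P ∨ j ∈ R) (p : Fin (n + 2))
    {lo hi a b : ℕ} (hR : ∀ k, lo ≤ k → k ≤ hi → p + k ∉ R)
    (ha : a ∈ Set.Icc lo hi) (hb : b ∈ Set.Icc lo hi) :
    p + (a : Fin (n + 2)) ∈ P ↔ p + (b : Fin (n + 2)) ∈ P := by
  rcases le_total a b with hab | hba
  · exact add_natCast_mem_iff_of_le hP p hab fun k hk hkb => hR k (ha.1.trans hk) (hkb.trans hb.2)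
  · exact (add_natCast_mem_iff_of_le hP p hba
      fun k hk hka => hR k (hb.1.trans hk) (hka.trans ha.2)).symm

theorem mem_of_forall_adj_of_subsingleton
    (hP : ∀ i ∈ P, ∀ j, (cycleGraph (n + 2)).Adj i j → j ∈ P ∨ j ∈ R)
    (hR : R.Subsingleton) (hne : P.Nonempty) {j : Fin (n + 2)} (hj : j ∉ R) : j ∈ P := by
  obtain ⟨p, hRp⟩ : ∃ p, R ⊆ {p} := by
    rcases hR.eq_empty_or_singleton with rfl | ⟨p, rfl⟩
    exacts [⟨j, Set.empty_subset _⟩, ⟨p, subset_rfl⟩]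
  have hoff : ∀ k, 1 ≤ k → k ≤ n + 1 → p + (k : Fin (n + 2)) ∉ R := fun k hk hkn hkR => by
    have := (Fin.add_natCast_inj p (k := k) (l := 0) (by omega) (by omega)).mp
      (by simpa using hRp hkR)
    omega
  have hval : ∀ i ≠ p, (i - p).val ∈ Set.Icc 1 (n + 1) := fun i hi => by
    have := (i - p).isLt
    have : (i - p).val ≠ 0 := by rwa [Fin.val_ne_zero_iff, sub_ne_zero]
    constructor <;> omega
  have hrest : ∀ i ≠ p, (p + 1 ∈ P ↔ i ∈ P) := fun i hi => by
    simpa [Fin.add_val_sub] using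
      add_natCast_mem_iff hP p hoff ⟨le_rfl, by omega⟩ (hval i hi)
  have hadj : (cycleGraph (n + 2)).Adj p (p + 1) := by rw [cycleGraph_adj]; right; ring
  have hp1 : p + 1 ≠ p := by simp
  obtain ⟨i, hi⟩ := hne
  have h1 : p + 1 ∈ P := by
    by_cases hip : i = p
    · subst hip
      exact (hP _ hi _ hadj).resolve_right fun h => hp1 (hRp h)
    · exact (hrest i hip).mpr hi
  by_cases hjp : j = p
  · subst hjp
    exact (hP _ h1 _ hadj.symm).resolve_right hj
  · exact (hrest j hjp).mp h1

/-- The hypotheses confine `P` to one of the two arcs between `p` and `q`, and the reflection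
`i ↦ p + q - i` maps each of these arcs onto itself. -/
theorem add_sub_mem_of_forall_adj {p q : Fin (n + 2)}
    (hP : ∀ i ∈ P, ∀ j, (cycleGraph (n + 2)).Adj i j → j ∈ P ∨ j ∈ ({p, q} : Set _))
    (hp : p ∉ P) (hq : q ∉ P) {i : Fin (n + 2)} (hi : i ∈ P) : p + q - i ∈ P := by
  obtain ⟨a, ha, rfl⟩ : ∃ a < n + 2, p + (a : Fin (n + 2)) = i :=
    ⟨_, (i - p).isLt, Fin.add_val_sub p i⟩
  obtain ⟨d, hd, rfl⟩ : ∃ d < n + 2, p + (d : Fin (n + 2)) = q :=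
    ⟨_, (q - p).isLt, Fin.add_val_sub p q⟩
  have ha0 : a ≠ 0 := by rintro rfl; exact hp (by simpa using hi)
  have had : a ≠ d := by rintro rfl; exact hq hi
  have hoff : ∀ k, k < n + 2 → k ≠ 0 → k ≠ d → p + (k : Fin (n + 2)) ∉ ({p, p + d} : Set _) := by
    intro k hk hk0 hkd hkR
    rcases hkR with h | h
    · exact hk0 ((Fin.add_natCast_inj p (l := 0) hk (by omega)).mp (by simpa using h))
    · exact hkd ((Fin.add_natCast_inj p hk hd).mp h)
  rcases lt_or_gt_of_ne had with had | hda
  · have h := add_natCast_mem_iff hP p (lo := 1) (hi := d - 1)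
      (fun k hk hkd => hoff k (by omega) (by omega) (by omega))
      (a := a) (b := d - a) ⟨by omega, by omega⟩ ⟨by omega, by omega⟩
    rw [Nat.cast_sub had.le] at h
    convert h.mp hi using 2; ring
  · have h := add_natCast_mem_iff hP p (lo := d + 1) (hi := n + 1)
      (fun k hk hkd => hoff k (by omega) (by omega) (by omega))
      (a := a) (b := n + 2 + d - a) ⟨by omega, by omega⟩ ⟨by omega, by omega⟩
    rw [Nat.cast_sub (by omega), Nat.cast_add, Fin.natCast_self, zero_add] at h
    convert h.mp hi using 2; ring

end CycleGraph

variable {V : Type*} {G G' : SimpleGraph V} {A B : Set V}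

def induceIsoOfAdjIff {W : Type*} {H : SimpleGraph W} (σ : V ≃ W) {s : Set V} {t : Set W}
    (hst : ∀ x, x ∈ s ↔ σ x ∈ t) (hadj : ∀ x ∈ s, ∀ y ∈ s, H.Adj (σ x) (σ y) ↔ G.Adj x y) :
    G.induce s ≃g H.induce t where
  toEquiv := σ.subtypeEquiv hst
  map_rel_iff' {x y} := hadj x x.2 y y.2

theorem subset_union_of_iso_cycleGraph {n : ℕ} {S R : Set V}
    (e : G.induce S ≃g cycleGraph (n + 2)) (hB : ∀ x ∈ B, ∀ y, G.Adj x y → y ∈ B ∨ y ∈ R)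
    (hR : (S ∩ R).Subsingleton) (hSB : (S ∩ B).Nonempty) : S ⊆ B ∪ R := by
  let f : Fin (n + 2) → V := fun i => e.symm i
  have hf : f.Injective := Subtype.val_injective.comp e.symm.injective
  have hP : ∀ i ∈ f ⁻¹' B, ∀ j, (cycleGraph (n + 2)).Adj i j → j ∈ f ⁻¹' B ∨ j ∈ f ⁻¹' R :=
    fun i hi j hij => hB _ hi _ (e.symm.map_adj_iff.mpr hij)
  have hR' : (f ⁻¹' R).Subsingleton := (hR.preimage hf).anti fun i hi => ⟨(e.symm i).2, hi⟩
  obtain ⟨b, hbS, hbB⟩ := hSB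
  intro x hxS
  by_contra hx
  rw [Set.mem_union, not_or] at hx
  have := mem_of_forall_adj_of_subsingleton hP hR' ⟨e ⟨b, hbS⟩, by simpa [f] using hbB⟩
    (j := e ⟨x, hxS⟩) (by simpa [f] using hx.2)
  exact hx.1 (by simpa [f] using this)

variable [DecidableEq V] {u v : V}

/-- A Whitney flip at `u, v` with sides `A, B`: `G'` agrees with `G` on `Bᶜ = A ∪ {u, v}`, and
with `G` relabelled by the transposition `(u v)` on `Aᶜ = B ∪ {u, v}`. Unlike `IsWhitneyFlip`, this
form is visibly symmetric in `G` and `G'` and stable under pulling back along injections. -/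
structure IsWhitneyFlipAt (G G' : SimpleGraph V) (u v : V) (A B : Set V) : Prop where
  union_eq : A ∪ B = {u, v}ᶜ
  disjoint : Disjoint A B
  not_adj : ∀ a ∈ A, ∀ b ∈ B, ¬ G.Adj a b
  not_adj' : ∀ a ∈ A, ∀ b ∈ B, ¬ G'.Adj a b
  adj_iff : ∀ x y, x ∉ B → y ∉ B → (G'.Adj x y ↔ G.Adj x y)
  adj_swap_iff : ∀ x y, x ∉ A → y ∉ A → (G'.Adj (swap u v x) (swap u v y) ↔ G.Adj x y)

namespace IsWhitneyFlipAt

variable (h : G.IsWhitneyFlipAt G' u v A B)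
include h

theorem left_notMem_left : u ∉ A := fun hu => by simpa using h.union_eq.subset (.inl hu)

theorem right_notMem_left : v ∉ A := fun hv => by simpa using h.union_eq.subset (.inl hv)

theorem left_notMem_right : u ∉ B := fun hu => by simpa using h.union_eq.subset (.inr hu)

theorem right_notMem_right : v ∉ B := fun hv => by simpa using h.union_eq.subset (.inr hv)

theorem mem_or_of_adj {x : V} (hx : x ∈ B) {y : V} (hxy : G.Adj x y) :
    y ∈ B ∨ y ∈ ({u, v} : Set V) := by
  by_contra! hy
  have : y ∈ A ∪ B := by rw [h.union_eq]; exact hy.2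
  exact h.not_adj y (this.resolve_right hy.1) x hx hxy.symm

theorem symm : G'.IsWhitneyFlipAt G u v A B where
  union_eq := h.union_eq
  disjoint := h.disjoint
  not_adj := h.not_adj'
  not_adj' := h.not_adj
  adj_iff x y hx hy := (h.adj_iff x y hx hy).symm
  adj_swap_iff x y hx hy := by
    have hmem {z} := swap_apply_mem_iff (x := z) h.left_notMem_left h.right_notMem_left
    simpa using (h.adj_swap_iff _ _ (hmem.not.mpr hx) (hmem.not.mpr hy)).symm

theorem comap {W : Type*} [DecidableEq W] {f : W → V} (hf : f.Injective) {p q : W}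
    (hp : f p = u) (hq : f q = v) :
    (G.comap f).IsWhitneyFlipAt (G'.comap f) p q (f ⁻¹' A) (f ⁻¹' B) where
  union_eq := by
    ext x
    rw [← Set.preimage_union, Set.mem_preimage, h.union_eq]
    simp [← hp, ← hq, hf.eq_iff]
  disjoint := h.disjoint.preimage f
  not_adj x hx y hy := h.not_adj _ hx _ hy
  not_adj' x hx y hy := h.not_adj' _ hx _ hy
  adj_iff x y hx hy := h.adj_iff _ _ hx hy
  adj_swap_iff x y hx hy := by
    simpa [comap_adj, hf.map_swap, hp, hq] using h.adj_swap_iff _ _ hx hy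

theorem mem_and_mem_of_iso_cycleGraph {n : ℕ} {S : Set V} (e : G.induce S ≃g cycleGraph (n + 2))
    (hSA : (S ∩ A).Nonempty) (hSB : (S ∩ B).Nonempty) : u ∈ S ∧ v ∈ S := by
  obtain ⟨a, haS, haA⟩ := hSA
  by_contra huv
  have hR : (S ∩ {u, v}).Subsingleton := by
    rintro x ⟨hxS, rfl | rfl⟩ y ⟨hyS, rfl | rfl⟩ <;> tauto
  rcases subset_union_of_iso_cycleGraph e (fun x hx _ hxy => h.mem_or_of_adj hx hxy) hR hSB haS
    with haB | rfl | rfl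
  · exact Set.disjoint_left.mp h.disjoint haA haB
  · exact h.left_notMem_left haA
  · exact h.right_notMem_left haA

end IsWhitneyFlipAt

theorem IsWhitneyFlipAt.nonempty_iso_cycleGraph {n : ℕ} {H : SimpleGraph (Fin (n + 2))}
    {p q : Fin (n + 2)} {Q P : Set (Fin (n + 2))}
    (h : (cycleGraph (n + 2)).IsWhitneyFlipAt H p q Q P) : Nonempty (H ≃g cycleGraph (n + 2)) := by
  classical
  have hr : ∀ i ∈ P, p + q - i ∈ P := fun i hi => add_sub_mem_of_forall_adj
    (fun _ hi _ hij => h.mem_or_of_adj hi hij) h.left_notMem_right h.right_notMem_right hi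
  let ψ : Fin (n + 2) → Fin (n + 2) := fun i => if i ∈ P then p + q - i else i
  have hψ : Function.Involutive ψ := fun i => by
    by_cases hi : i ∈ P <;> simp [ψ, hi, hr]
  have hψQ : ∀ i ∉ Q, ψ i = p + q - swap p q i := fun i hi => by
    by_cases hiP : i ∈ P
    · have hip : i ≠ p := fun hip => h.left_notMem_right (hip ▸ hiP)
      have hiq : i ≠ q := fun hiq => h.right_notMem_right (hiq ▸ hiP)
      simp [ψ, hiP, swap_apply_of_ne_of_ne hip hiq]
    · have : i ∉ Q ∪ P := by simp [hi, hiP]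
      rw [h.union_eq, Set.notMem_compl_iff] at this
      rcases this with rfl | rfl <;> simp [ψ, hiP]
  have hQP : ∀ {k}, k ∈ Q → k ∉ P := fun hk => Set.disjoint_left.mp h.disjoint hk
  have hcross : ∀ i ∈ Q, ∀ j ∈ P, ¬ (cycleGraph (n + 2)).Adj (ψ i) (ψ j) ∧ ¬ H.Adj i j :=
    fun i hi j hj => by
      simp only [ψ, hQP hi, hj, if_true, if_false]
      exact ⟨h.not_adj i hi _ (hr j hj), h.not_adj' i hi j hj⟩
  refine ⟨⟨hψ.toPerm ψ, fun {i j} => ?_⟩⟩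
  change (cycleGraph (n + 2)).Adj (ψ i) (ψ j) ↔ H.Adj i j
  by_cases hP' : i ∉ P ∧ j ∉ P
  · simp only [ψ, hP'.1, hP'.2, if_false]
    exact (h.adj_iff i j hP'.1 hP'.2).symm
  by_cases hQ' : i ∉ Q ∧ j ∉ Q
  · rw [hψQ i hQ'.1, hψQ j hQ'.2, cycleGraph_adj_sub_sub]
    exact h.symm.adj_swap_iff i j hQ'.1 hQ'.2
  have : (i ∈ Q ∧ j ∈ P) ∨ (j ∈ Q ∧ i ∈ P) := by
    have := @hQP i; have := @hQP j; tauto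
  rcases this with ⟨hi, hj⟩ | ⟨hj, hi⟩
  · exact iff_of_false (hcross i hi j hj).1 (hcross i hi j hj).2
  · exact iff_of_false (fun hadj => (hcross j hj i hi).1 hadj.symm)
      (fun hadj => (hcross j hj i hi).2 hadj.symm)

open Classical in
noncomputable def flipSet (u v : V) (A : Set V) (S : Finset V) : Finset V :=
  if Disjoint (S : Set V) A then S.map (swap u v).toEmbedding else S

theorem flipSet_of_disjoint {S : Finset V} (hS : Disjoint (S : Set V) A) :
    flipSet u v A S = S.map (swap u v).toEmbedding := by
  rw [flipSet, if_pos hS]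

theorem flipSet_of_not_disjoint {S : Finset V} (hS : ¬ Disjoint (S : Set V) A) :
    flipSet u v A S = S := by
  rw [flipSet, if_neg hS]

theorem flipSet_flipSet (hu : u ∉ A) (hv : v ∉ A) (S : Finset V) :
    flipSet u v A (flipSet u v A S) = S := by
  by_cases hS : Disjoint (S : Set V) A
  · have hS' : Disjoint ((S.map (swap u v).toEmbedding : Finset V) : Set V) A := by
      rw [Finset.coe_map, Set.disjoint_left]
      rintro _ ⟨x, hx, rfl⟩
      exact (swap_apply_mem_iff hu hv).not.mpr (Set.disjoint_left.mp hS hx)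
    ext x
    simp [flipSet_of_disjoint hS, flipSet_of_disjoint hS', Finset.mem_map_equiv]
  · rw [flipSet_of_not_disjoint hS, flipSet_of_not_disjoint hS]

theorem IsWhitneyFlipAt.nonempty_induce_flipSet_iso (h : G.IsWhitneyFlipAt G' u v A B) {n : ℕ}
    {S : Finset V} (e : G.induce (S : Set V) ≃g cycleGraph (n + 2)) :
    Nonempty (G'.induce (flipSet u v A S : Set V) ≃g cycleGraph (n + 2)) := by
  by_cases hSA : Disjoint (S : Set V) A
  · rw [flipSet_of_disjoint hSA]
    refine ⟨(induceIsoOfAdjIff (swap u v) (fun x => by simp)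
      fun x hx y hy => ?_).symm.trans e⟩
    exact h.adj_swap_iff x y (Set.disjoint_left.mp hSA hx) (Set.disjoint_left.mp hSA hy)
  rw [flipSet_of_not_disjoint hSA]
  by_cases hSB : Disjoint (S : Set V) B
  · refine ⟨(induceIsoOfAdjIff (Equiv.refl V) (fun x => Iff.rfl) fun x hx y hy => ?_).symm.trans e⟩
    exact h.adj_iff x y (Set.disjoint_left.mp hSB hx) (Set.disjoint_left.mp hSB hy)
  obtain ⟨hu, hv⟩ := h.mem_and_mem_of_iso_cycleGraph e
    (Set.not_disjoint_iff_nonempty_inter.mp hSA) (Set.not_disjoint_iff_nonempty_inter.mp hSB)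
  let f : Fin (n + 2) → V := fun i => e.symm i
  have hf : f.Injective := Subtype.val_injective.comp e.symm.injective
  have hGf : G.comap f = cycleGraph (n + 2) := by ext i j; exact e.symm.map_adj_iff
  have hflip := h.comap hf (p := e ⟨u, hu⟩) (q := e ⟨v, hv⟩) (by simp [f]) (by simp [f])
  rw [hGf] at hflip
  obtain ⟨ψ⟩ := hflip.nonempty_iso_cycleGraph
  exact ⟨(⟨e.toEquiv, by simp [f]⟩ : G'.induce (S : Set V) ≃g G'.comap f).trans ψ⟩

end SimpleGraph

theorem IsWhitneyFlip.exists_isWhitneyFlipAt {V : Type*} [DecidableEq V] {G G' : SimpleGraph V}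
    (h : IsWhitneyFlip G G') : ∃ u v A B, G.IsWhitneyFlipAt G' u v A B := by
  obtain ⟨u, v, A, B, huv, hcover, hdisj, hno, hG'⟩ := h
  have hmem : ∀ x, x ∈ A ∪ B ↔ x ≠ u ∧ x ≠ v := fun x => by simp [hcover]
  refine ⟨u, v, A, B, hcover, hdisj, hno, ?_, ?_, ?_⟩
  · intro a ha b hb
    have := hmem a; have := hmem b; rw [hG']; grind
  · intro x y hx hy
    have := hmem x; have := hmem y; rw [hG']; grind
  · have hside : ∀ x, x ∉ A → x = u ∨ x = v ∨ (x ∈ B ∧ x ≠ u ∧ x ≠ v) := fun x hx => by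
      have := hmem x; simp only [Set.mem_union] at this; tauto
    obtain ⟨huA, huB⟩ : u ∉ A ∧ u ∉ B := by simpa [Set.mem_union] using hmem u
    obtain ⟨hvA, hvB⟩ : v ∉ A ∧ v ∉ B := by simpa [Set.mem_union] using hmem v
    intro x y hx hy
    rcases hside x hx with rfl | rfl | ⟨hxB, hxu, hxv⟩ <;>
    rcases hside y hy with rfl | rfl | ⟨hyB, hyu, hyv⟩ <;>
    simp [swap_apply_of_ne_of_ne, G.adj_comm, huv.symm, *]

/-- For `n ≥ 3`, the number of induced `n`-cycles of a graph is invariant under Whitney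
flips: `i(Cₙ, G) = i(Cₙ, G')` whenever `G'` is a Whitney flip of `G`. -/
theorem cycleCount_invariant_of_whitneyFlip (n : ℕ) (hn : 3 ≤ n)
    {β : Type*} [Fintype β] (G G' : SimpleGraph β) (hGG' : IsWhitneyFlip G G') :
    graphCount (SimpleGraph.cycleGraph n) G = graphCount (SimpleGraph.cycleGraph n) G' := by
  classical
  obtain ⟨m, rfl⟩ : ∃ m, n = m + 2 := ⟨n - 2, by omega⟩
  obtain ⟨u, v, A, B, h⟩ := hGG'.exists_isWhitneyFlipAt
  have hinv : Function.Involutive (SimpleGraph.flipSet u v A) :=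
    SimpleGraph.flipSet_flipSet h.left_notMem_left h.right_notMem_left
  exact Nat.card_congr <| Equiv.subtypeEquiv (hinv.toPerm _) fun S =>
    ⟨fun ⟨e⟩ => h.nonempty_induce_flipSet_iso e,
      fun ⟨e⟩ => hinv S ▸ h.symm.nonempty_induce_flipSet_iso e⟩
end

section
/- Let n ≥ 3 and let Kₙ denote the complete graph on n vertices. Then for every finite simple graph G and every Whitney flip G' of G, i(Kₙ, G) = i(Kₙ, G'); that is, the number of n-cliques of a graph is invariant under Whitney flips. -/
open Classical in
/-- Swap `u` and `v` in `S` if `S` meets `B`. -/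
noncomputable def flipMap {β : Type*} (u v : β) (B : Set β) (S : Finset β) : Finset β :=
  letI := Classical.decEq β
  if ∃ b ∈ S, b ∈ B then S.map (Equiv.swap u v).toEmbedding else S

section flip
variable {β : Type*} (u v : β) (B : Set β)

lemma mem_map_swap [DecidableEq β] (S : Finset β) (x : β) :
    x ∈ S.map (Equiv.swap u v).toEmbedding ↔ Equiv.swap u v x ∈ S := by
  rw [Finset.mem_map_equiv, Equiv.symm_swap]

lemma flipMap_flipMap (hu : u ∉ B) (hv : v ∉ B) (S : Finset β) :
    flipMap u v B (flipMap u v B S) = S := by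
  letI := Classical.decEq β
  unfold flipMap
  by_cases h : ∃ b ∈ S, b ∈ B
  · rw [if_pos h, if_pos, Finset.map_map]
    · ext x
      simp [Equiv.swap_apply_self]
    · obtain ⟨b, hbS, hbB⟩ := h
      refine ⟨b, ?_, hbB⟩
      rw [mem_map_swap, Equiv.swap_apply_of_ne_of_ne (by rintro rfl; exact hu hbB)
        (by rintro rfl; exact hv hbB)]
      exact hbS
  · rw [if_neg h, if_neg h]

end flip

lemma clique_transfer {β : Type*} {G G' : SimpleGraph β} {u v : β} {A B : Set β}
    (huv : u ≠ v) (hAB : A ∪ B = ({u, v} : Set β)ᶜ) (hdisj : Disjoint A B)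
    (hnoe : ∀ a ∈ A, ∀ b ∈ B, ¬ G.Adj a b)
    (hadj : ∀ x y : β, G'.Adj x y ↔
      (x ∈ A ∪ {u, v} ∧ y ∈ A ∪ {u, v} ∧ G.Adj x y) ∨
      (x ∈ B ∧ y ∈ B ∧ G.Adj x y) ∨
      (x ∈ B ∧ y = u ∧ G.Adj x v) ∨ (x = u ∧ y ∈ B ∧ G.Adj v y) ∨
      (x ∈ B ∧ y = v ∧ G.Adj x u) ∨ (x = v ∧ y ∈ B ∧ G.Adj u y))
    {n : ℕ} {S : Finset β} (hS : G.IsNClique n S) :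
    G'.IsNClique n (flipMap u v B S) := by
  letI := Classical.decEq β
  have hcompl : ∀ z, z ∈ A ∪ B → z ≠ u ∧ z ≠ v := by
    intro z hz
    rw [hAB] at hz
    simpa [Set.mem_compl_iff, not_or] using hz
  have hmem : ∀ x : β, x ≠ u → x ≠ v → x ∈ A ∨ x ∈ B := by
    intro x hxu hxv
    have hx : x ∈ A ∪ B := by rw [hAB]; simp [hxu, hxv]
    exact hx
  unfold flipMap
  by_cases hc : ∃ b ∈ S, b ∈ B
  · rw [if_pos hc]
    obtain ⟨b0, hb0S, hb0B⟩ := hc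
    have hSB : ∀ x ∈ S, x = u ∨ x = v ∨ x ∈ B := by
      intro x hx
      by_cases hxu : x = u
      · exact Or.inl hxu
      by_cases hxv : x = v
      · exact Or.inr (Or.inl hxv)
      rcases hmem x hxu hxv with hxA | hxB
      · have hxb0 : x ≠ b0 := fun h => (Set.disjoint_left.mp hdisj hxA) (h ▸ hb0B)
        exact absurd (hS.isClique hx hb0S hxb0) (hnoe x hxA b0 hb0B)
      · exact Or.inr (Or.inr hxB)
    have helper : ∀ p q, p ∈ S → q ∈ S → p ≠ q →
        G'.Adj (Equiv.swap u v p) (Equiv.swap u v q) := by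
      intro p q hp hq hpq
      have hG := hS.isClique hp hq hpq
      rw [hadj]
      rcases hSB p hp with rfl | rfl | hpB <;> rcases hSB q hq with rfl | rfl | hqB
      · exact absurd rfl hpq
      · rw [Equiv.swap_apply_left, Equiv.swap_apply_right]
        exact Or.inl ⟨by simp, by simp, hG.symm⟩
      · rw [Equiv.swap_apply_left,
          Equiv.swap_apply_of_ne_of_ne (hcompl q (Or.inr hqB)).1 (hcompl q (Or.inr hqB)).2]
        exact Or.inr (Or.inr (Or.inr (Or.inr (Or.inr ⟨rfl, hqB, hG⟩))))
      · rw [Equiv.swap_apply_left, Equiv.swap_apply_right]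
        exact Or.inl ⟨by simp, by simp, hG.symm⟩
      · exact absurd rfl hpq
      · rw [Equiv.swap_apply_right,
          Equiv.swap_apply_of_ne_of_ne (hcompl q (Or.inr hqB)).1 (hcompl q (Or.inr hqB)).2]
        exact Or.inr (Or.inr (Or.inr (Or.inl ⟨rfl, hqB, hG⟩)))
      · rw [Equiv.swap_apply_left,
          Equiv.swap_apply_of_ne_of_ne (hcompl p (Or.inr hpB)).1 (hcompl p (Or.inr hpB)).2]
        exact Or.inr (Or.inr (Or.inr (Or.inr (Or.inl ⟨hpB, rfl, hG⟩))))
      · rw [Equiv.swap_apply_right,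
          Equiv.swap_apply_of_ne_of_ne (hcompl p (Or.inr hpB)).1 (hcompl p (Or.inr hpB)).2]
        exact Or.inr (Or.inr (Or.inl ⟨hpB, rfl, hG⟩))
      · rw [Equiv.swap_apply_of_ne_of_ne (hcompl p (Or.inr hpB)).1 (hcompl p (Or.inr hpB)).2,
          Equiv.swap_apply_of_ne_of_ne (hcompl q (Or.inr hqB)).1 (hcompl q (Or.inr hqB)).2]
        exact Or.inr (Or.inl ⟨hpB, hqB, hG⟩)
    constructor
    · intro x hx y hy hxy
      have hx' : Equiv.swap u v x ∈ S := (mem_map_swap u v S x).mp (Finset.mem_coe.mp hx)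
      have hy' : Equiv.swap u v y ∈ S := (mem_map_swap u v S y).mp (Finset.mem_coe.mp hy)
      have hne : Equiv.swap u v x ≠ Equiv.swap u v y :=
        fun h => hxy ((Equiv.swap u v).injective h)
      have h := helper _ _ hx' hy' hne
      simpa [Equiv.swap_apply_self] using h
    · rw [Finset.card_map]
      exact hS.card_eq
  · rw [if_neg hc]
    have hSA : ∀ x ∈ S, x ∈ A ∪ {u, v} := by
      intro x hx
      by_cases hxu : x = u
      · exact Or.inr (by simp [hxu])
      by_cases hxv : x = v
      · exact Or.inr (by simp [hxv])
      rcases hmem x hxu hxv with hxA | hxB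
      · exact Or.inl hxA
      · exact absurd ⟨x, hx, hxB⟩ hc
    constructor
    · intro x hx y hy hxy
      rw [hadj]
      exact Or.inl ⟨hSA x hx, hSA y hy, hS.isClique hx hy hxy⟩
    · exact hS.card_eq

lemma flip_symm {β : Type*} {G G' : SimpleGraph β} {u v : β} {A B : Set β}
    (huv : u ≠ v) (hAB : A ∪ B = ({u, v} : Set β)ᶜ) (hdisj : Disjoint A B)
    (hnoe : ∀ a ∈ A, ∀ b ∈ B, ¬ G.Adj a b)
    (hadj : ∀ x y : β, G'.Adj x y ↔
      (x ∈ A ∪ {u, v} ∧ y ∈ A ∪ {u, v} ∧ G.Adj x y) ∨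
      (x ∈ B ∧ y ∈ B ∧ G.Adj x y) ∨
      (x ∈ B ∧ y = u ∧ G.Adj x v) ∨ (x = u ∧ y ∈ B ∧ G.Adj v y) ∨
      (x ∈ B ∧ y = v ∧ G.Adj x u) ∨ (x = v ∧ y ∈ B ∧ G.Adj u y)) :
    (∀ a ∈ A, ∀ b ∈ B, ¬ G'.Adj a b) ∧
    (∀ x y : β, G.Adj x y ↔
      (x ∈ A ∪ {u, v} ∧ y ∈ A ∪ {u, v} ∧ G'.Adj x y) ∨
      (x ∈ B ∧ y ∈ B ∧ G'.Adj x y) ∨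
      (x ∈ B ∧ y = u ∧ G'.Adj x v) ∨ (x = u ∧ y ∈ B ∧ G'.Adj v y) ∨
      (x ∈ B ∧ y = v ∧ G'.Adj x u) ∨ (x = v ∧ y ∈ B ∧ G'.Adj u y)) := by
  have hcompl : ∀ z, z ∈ A ∪ B → z ≠ u ∧ z ≠ v := by
    intro z hz
    rw [hAB] at hz
    simpa [Set.mem_compl_iff, not_or] using hz
  have huA : u ∉ A := fun h => (hcompl u (Or.inl h)).1 rfl
  have huB : u ∉ B := fun h => (hcompl u (Or.inr h)).1 rfl
  have hvA : v ∉ A := fun h => (hcompl v (Or.inl h)).2 rfl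
  have hvB : v ∉ B := fun h => (hcompl v (Or.inr h)).2 rfl
  have hvu : v ≠ u := huv.symm
  have hnotB : ∀ z, z ∈ A ∪ ({u, v} : Set β) → z ∉ B := by
    intro z hz hzB
    rcases hz with hz | hz
    · exact Set.disjoint_left.mp hdisj hz hzB
    · rcases hz with rfl | rfl
      · exact huB hzB
      · exact hvB hzB
  have tri : ∀ z : β, z = u ∨ z = v ∨ z ∈ A ∨ z ∈ B := by
    intro z
    by_cases h1 : z = u
    · exact Or.inl h1
    by_cases h2 : z = v
    · exact Or.inr (Or.inl h2)
    have hz : z ∈ A ∪ B := by rw [hAB]; simp [h1, h2]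
    rcases hz with h | h
    · exact Or.inr (Or.inr (Or.inl h))
    · exact Or.inr (Or.inr (Or.inr h))
  have humem : u ∈ A ∪ ({u, v} : Set β) := Or.inr (by simp)
  have hvmem : v ∈ A ∪ ({u, v} : Set β) := Or.inr (by simp)
  constructor
  · intro a ha b hb h
    have hb' : b ∉ A ∪ ({u, v} : Set β) := by
      intro hc
      exact hnotB b hc hb
    have haB : a ∉ B := Set.disjoint_left.mp hdisj ha
    have ha1 := (hcompl a (Or.inl ha)).1
    have ha2 := (hcompl a (Or.inl ha)).2
    rw [hadj] at h
    rcases h with ⟨_, hy, _⟩ | ⟨hx, _, _⟩ | ⟨hx, _, _⟩ | ⟨hx, _, _⟩ | ⟨hx, _, _⟩ | ⟨hx, _, _⟩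
    · exact hb' hy
    · exact haB hx
    · exact haB hx
    · exact ha1 hx
    · exact haB hx
    · exact ha2 hx
  · intro x y
    constructor
    · intro h
      rcases tri x with hx | hx | hx | hx <;> rcases tri y with hy | hy | hy | hy
      · exact absurd (hx.trans hy.symm) h.ne
      · exact Or.inl ⟨by simp [hx], by simp [hy],
          (hadj x y).mpr (Or.inl ⟨by simp [hx], by simp [hy], h⟩)⟩
      · exact Or.inl ⟨by simp [hx], Or.inl hy,
          (hadj x y).mpr (Or.inl ⟨by simp [hx], Or.inl hy, h⟩)⟩
      · exact Or.inr (Or.inr (Or.inr (Or.inl ⟨hx, hy,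
          (hadj v y).mpr (Or.inr (Or.inr (Or.inr (Or.inr (Or.inr ⟨rfl, hy, hx ▸ h⟩)))))⟩)))
      · exact Or.inl ⟨by simp [hx], by simp [hy],
          (hadj x y).mpr (Or.inl ⟨by simp [hx], by simp [hy], h⟩)⟩
      · exact absurd (hx.trans hy.symm) h.ne
      · exact Or.inl ⟨by simp [hx], Or.inl hy,
          (hadj x y).mpr (Or.inl ⟨by simp [hx], Or.inl hy, h⟩)⟩
      · exact Or.inr (Or.inr (Or.inr (Or.inr (Or.inr ⟨hx, hy,
          (hadj u y).mpr (Or.inr (Or.inr (Or.inr (Or.inl ⟨rfl, hy, hx ▸ h⟩))))⟩))))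
      · exact Or.inl ⟨Or.inl hx, by simp [hy],
          (hadj x y).mpr (Or.inl ⟨Or.inl hx, by simp [hy], h⟩)⟩
      · exact Or.inl ⟨Or.inl hx, by simp [hy],
          (hadj x y).mpr (Or.inl ⟨Or.inl hx, by simp [hy], h⟩)⟩
      · exact Or.inl ⟨Or.inl hx, Or.inl hy,
          (hadj x y).mpr (Or.inl ⟨Or.inl hx, Or.inl hy, h⟩)⟩
      · exact absurd h (hnoe x hx y hy)
      · exact Or.inr (Or.inr (Or.inl ⟨hx, hy,
          (hadj x v).mpr (Or.inr (Or.inr (Or.inr (Or.inr (Or.inl ⟨hx, rfl, hy ▸ h⟩)))))⟩))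
      · exact Or.inr (Or.inr (Or.inr (Or.inr (Or.inl ⟨hx, hy,
          (hadj x u).mpr (Or.inr (Or.inr (Or.inl ⟨hx, rfl, hy ▸ h⟩)))⟩))))
      · exact absurd h.symm (hnoe y hy x hx)
      · exact Or.inr (Or.inl ⟨hx, hy, (hadj x y).mpr (Or.inr (Or.inl ⟨hx, hy, h⟩))⟩)
    · rintro (⟨hx1, hy1, h⟩ | ⟨hx1, hy1, h⟩ | ⟨hx1, hy1, h⟩ | ⟨hx1, hy1, h⟩ | ⟨hx1, hy1, h⟩ |
        ⟨hx1, hy1, h⟩)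
      · rw [hadj] at h
        rcases h with ⟨_, _, h⟩ | ⟨hx2, _, _⟩ | ⟨hx2, _, _⟩ | ⟨_, hy2, _⟩ | ⟨hx2, _, _⟩ |
          ⟨_, hy2, _⟩
        · exact h
        · exact absurd hx2 (hnotB x hx1)
        · exact absurd hx2 (hnotB x hx1)
        · exact absurd hy2 (hnotB y hy1)
        · exact absurd hx2 (hnotB x hx1)
        · exact absurd hy2 (hnotB y hy1)
      · rw [hadj] at h
        rcases h with ⟨hx2, _, _⟩ | ⟨_, _, h⟩ | ⟨_, hyu, _⟩ | ⟨hxu, _, _⟩ | ⟨_, hyv, _⟩ |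
          ⟨hxv, _, _⟩
        · exact absurd hx1 (hnotB x hx2)
        · exact h
        · exact absurd (hyu ▸ hy1) huB
        · exact absurd (hxu ▸ hx1) huB
        · exact absurd (hyv ▸ hy1) hvB
        · exact absurd (hxv ▸ hx1) hvB
      · rw [hadj] at h
        rw [hy1]
        rcases h with ⟨hx2, _, _⟩ | ⟨_, hv2, _⟩ | ⟨_, hvu', _⟩ | ⟨hxu, _, _⟩ | ⟨_, _, h⟩ |
          ⟨hxv, _, _⟩
        · exact absurd hx1 (hnotB x hx2)
        · exact absurd hv2 hvB
        · exact absurd hvu' hvu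
        · exact absurd (hxu ▸ hx1) huB
        · exact h
        · exact absurd (hxv ▸ hx1) hvB
      · rw [hadj] at h
        rw [hx1]
        rcases h with ⟨_, hy2, _⟩ | ⟨hv2, _, _⟩ | ⟨hv2, _, _⟩ | ⟨hvu', _, _⟩ | ⟨hv2, _, _⟩ |
          ⟨_, _, h⟩
        · exact absurd hy1 (hnotB y hy2)
        · exact absurd hv2 hvB
        · exact absurd hv2 hvB
        · exact absurd hvu' hvu
        · exact absurd hv2 hvB
        · exact h
      · rw [hadj] at h
        rw [hy1]
        rcases h with ⟨hx2, _, _⟩ | ⟨_, hu2, _⟩ | ⟨_, _, h⟩ | ⟨hxu, _, _⟩ | ⟨_, huv', _⟩ |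
          ⟨hxv, _, _⟩
        · exact absurd hx1 (hnotB x hx2)
        · exact absurd hu2 huB
        · exact h
        · exact absurd (hxu ▸ hx1) huB
        · exact absurd huv' huv
        · exact absurd (hxv ▸ hx1) hvB
      · rw [hadj] at h
        rw [hx1]
        rcases h with ⟨_, hy2, _⟩ | ⟨hu2, _, _⟩ | ⟨hu2, _, _⟩ | ⟨_, _, h⟩ | ⟨hu2, _, _⟩ |
          ⟨huv', _, _⟩
        · exact absurd hy1 (hnotB y hy2)
        · exact absurd hu2 huB
        · exact absurd hu2 huB
        · exact h
        · exact absurd hu2 huB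
        · exact absurd huv' huv

lemma iso_top_iff {β : Type*} (G : SimpleGraph β) (n : ℕ) (S : Finset β) :
    Nonempty (G.induce (S : Set β) ≃g (⊤ : SimpleGraph (Fin n))) ↔ G.IsNClique n S := by
  constructor
  · rintro ⟨e⟩
    constructor
    · intro x hx y hy hxy
      have h : (⊤ : SimpleGraph (Fin n)).Adj (e ⟨x, hx⟩) (e ⟨y, hy⟩) := by
        simp only [SimpleGraph.top_adj]
        exact fun h => hxy (by simpa using Subtype.ext_iff.mp (e.injective h))
      exact e.map_rel_iff.mp h
    · have := Nat.card_congr e.toEquiv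
      simpa [Nat.card_coe_set_eq, Set.ncard_coe_finset] using this
  · rintro ⟨hclique, hcard⟩
    rw [SimpleGraph.isClique_iff_induce_eq] at hclique
    rw [hclique]
    exact ⟨SimpleGraph.Iso.completeGraph
      ((Equiv.subtypeEquivRight (fun x => Finset.mem_coe)).trans (S.equivFinOfCardEq hcard))⟩

/-- For `n ≥ 3`, the number of `n`-cliques (induced copies of the complete graph `Kₙ`)
of a graph is invariant under Whitney flips: `i(Kₙ, G) = i(Kₙ, G')` whenever `G'` is a
Whitney flip of `G`. -/
theorem cliqueCount_invariant_of_whitneyFlip (n : ℕ) (hn : 3 ≤ n)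
    {β : Type*} [Fintype β] (G G' : SimpleGraph β) (hGG' : IsWhitneyFlip G G') :
    graphCount (⊤ : SimpleGraph (Fin n)) G = graphCount (⊤ : SimpleGraph (Fin n)) G' := by
  obtain ⟨u, v, A, B, huv, hAB, hdisj, hnoe, hadj⟩ := hGG'
  obtain ⟨hnoe', hadj'⟩ := flip_symm huv hAB hdisj hnoe hadj
  have huB : u ∉ B := by
    intro h
    have hu : u ∈ A ∪ B := Or.inr h
    rw [hAB] at hu
    simp at hu
  have hvB : v ∉ B := by
    intro h
    have hv : v ∈ A ∪ B := Or.inr h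
    rw [hAB] at hv
    simp at hv
  have e : {S : Finset β // G.IsNClique n S} ≃ {S : Finset β // G'.IsNClique n S} :=
    { toFun := fun S => ⟨flipMap u v B S.1, clique_transfer huv hAB hdisj hnoe hadj S.2⟩
      invFun := fun S => ⟨flipMap u v B S.1, clique_transfer huv hAB hdisj hnoe' hadj' S.2⟩
      left_inv := fun S => Subtype.ext (flipMap_flipMap u v B huB hvB S.1)
      right_inv := fun S => Subtype.ext (flipMap_flipMap u v B huB hvB S.1) }
  exact Nat.card_congr ((Equiv.subtypeEquivRight (fun S => iso_top_iff G n S)).trans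
    (e.trans (Equiv.subtypeEquivRight (fun S => (iso_top_iff G' n S).symm))))
end
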